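/- arXiv:2209.13913 — 4 statements merged into one kernel-verified Lean document; each statement's English description precedes it below -/
import Mathlib

section
/- Let Q be a prime, and work in the field F_Q = ZMod Q. Suppose r_A, s_A, s_B ∈ F_Q and r_B ∈ F_Q with r_B ≠ 0 satisfy the OLE tuple relation r_A · r_B = s_A + s_B. For inputs hx, hy ∈ F_Q (the hashed elements of Alice and Bob), let c = s_A - hx and d = (c + hy + s_B) · r_B⁻¹. Then d = r_A if and only if hx = hy. -/
/-- Correctness of the comparison protocol (Theorem 1): with an OLE tuple
`(r_A, r_B, s_A, s_B)` over `F_Q = ZMod Q` (`Q` prime), `r_B ≠ 0`,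
`r_A * r_B = s_A + s_B`, Alice's message `c = s_A - hx` and Bob's reply
`d = (c + hy + s_B) / r_B` satisfy `d = r_A ↔ hx = hy`. -/
theorem comparison_correct (Q : ℕ) [Fact Q.Prime]
    (r_A r_B s_A s_B : ZMod Q) (hrB : r_B ≠ 0)
    (hOLE : r_A * r_B = s_A + s_B)
    (hx hy : ZMod Q)
    (c : ZMod Q) (hc : c = s_A - hx)
    (d : ZMod Q) (hd : d = (c + hy + s_B) * r_B⁻¹) :
    d = r_A ↔ hx = hy := by
  subst hc hd
  rw [mul_inv_eq_iff_eq_mul₀ hrB, hOLE]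
  constructor
  · intro h; linear_combination -h
  · intro h; linear_combination -h
end

section
/- Let Q be a prime, F_Q = ZMod Q, and β ∈ ℕ. Suppose s_A ∈ F_Q, and for each j ∈ Fin β suppose r_{A,j}, s_{B,j} ∈ F_Q and r_{B,j} ∈ F_Q with r_{B,j} ≠ 0 satisfy r_{A,j} · r_{B,j} = s_A + s_{B,j}. For hx ∈ F_Q (Alice's hashed element) and hy : Fin β → F_Q (Bob's hashed elements), let c = s_A - hx and, for each j, d_j = (c + hy j + s_{B,j}) · r_{B,j}⁻¹. Then for every j, d_j = r_{A,j} if and only if hx = hy j. -/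
/-- Correctness of the communication-optimized set comparison step: with an
optimized OLE tuple `(s_A, (s_{B,j}, r_{A,j}, r_{B,j})_j)` satisfying
`r_{A,j} * r_{B,j} = s_A + s_{B,j}` and `r_{B,j} ≠ 0`, Alice's single message
`c = s_A - hx` and Bob's replies `d j = (c + hy j + s_{B,j}) / r_{B,j}`
satisfy `d j = r_{A,j} ↔ hx = hy j` for every `j`. -/
theorem set_comparison_correct (Q : ℕ) [Fact Q.Prime] (β : ℕ)
    (s_A : ZMod Q) (r_A r_B s_B : Fin β → ZMod Q)
    (hrB : ∀ j, r_B j ≠ 0)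
    (hOLE : ∀ j, r_A j * r_B j = s_A + s_B j)
    (hx : ZMod Q) (hy : Fin β → ZMod Q)
    (c : ZMod Q) (hc : c = s_A - hx)
    (d : Fin β → ZMod Q) (hd : ∀ j, d j = (c + hy j + s_B j) * (r_B j)⁻¹) :
    ∀ j, d j = r_A j ↔ hx = hy j := by
  intro j
  rw [hd j, hc]
  rw [mul_inv_eq_iff_eq_mul₀ (hrB j), hOLE j]
  constructor
  · intro h; linear_combination -h
  · intro h; linear_combination -h
end

section
/- Let Q ≥ 2 be a prime and let q : Fin m → ℕ be pairwise coprime moduli, each at least 2, with Q' = ∏ i, q i. Let w, u ∈ ℕ with w < Q and u · Q + w < Q'. Then the unique natural number v < Q' satisfying v ≡ u · Q + w (mod q i) for every i ∈ Fin m equals u · Q + w, and consequently v ≡ w (mod Q). In particular, if w is the natural-number representative of (s_A + s_B) · r_B⁻¹ in ZMod Q (for s_A, s_B ∈ ZMod Q and r_B ∈ ZMod Q with r_B ≠ 0), then r_A := (v : ZMod Q) satisfies r_A · r_B = s_A + s_B. -/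
/-- Correctness of the LBE-based OLE tuple precomputation: with pairwise
coprime moduli `q i ≥ 2` of product `Q'`, `w < Q`, and `u * Q + w < Q'`, the
unique `v < Q'` with `v ≡ u * Q + w (mod q i)` for all `i` equals `u * Q + w`,
hence `v ≡ w (mod Q)`; in particular if `w` is the representative of
`(s_A + s_B) / r_B` in `ZMod Q`, then `r_A := (v : ZMod Q)` satisfies
`r_A * r_B = s_A + s_B`. -/
theorem lbe_offline_correct (Q : ℕ) [Fact Q.Prime]
    (m : ℕ) (q : Fin m → ℕ) (hq2 : ∀ i, 2 ≤ q i)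
    (hcop : ∀ i j : Fin m, i ≠ j → Nat.Coprime (q i) (q j))
    (Q' : ℕ) (hQ' : Q' = ∏ i, q i)
    (u w : ℕ) (hw : w < Q) (hlt : u * Q + w < Q')
    (s_A s_B r_B : ZMod Q) (hrB : r_B ≠ 0)
    (hwval : w = ((s_A + s_B) * r_B⁻¹).val)
    (v : ℕ) (hv : v < Q')
    (hmod : ∀ i, v ≡ u * Q + w [MOD q i]) :
    v = u * Q + w ∧ v ≡ w [MOD Q] ∧ (v : ZMod Q) * r_B = s_A + s_B := by
  have key : v = u * Q + w := by
    have hdvd : (Q' : ℤ) ∣ ((u * Q + w : ℕ) - (v : ℤ)) := by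
      rw [hQ', Nat.cast_prod]
      refine Finset.prod_dvd_of_coprime ?_ ?_
      · intro i _ j _ hij
        exact (Nat.isCoprime_iff_coprime.mpr (hcop i j hij))
      · intro i _
        exact (hmod i).dvd
    have h1 : ((u * Q + w : ℕ) - (v : ℤ)) = 0 := by
      refine Int.eq_zero_of_abs_lt_dvd hdvd ?_
      rw [abs_sub_lt_iff]
      constructor <;> push_cast <;> omega
    omega
  refine ⟨key, ?_, ?_⟩
  · rw [key]; exact ((Nat.modEq_iff_dvd' (Nat.le_add_left w (u * Q))).mpr ⟨u, by rw [Nat.add_sub_cancel, Nat.mul_comm]⟩).symm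
  · have hwz : (w : ZMod Q) = (s_A + s_B) * r_B⁻¹ := by
      rw [hwval, ZMod.natCast_val, ZMod.cast_id]
    rw [key]
    push_cast
    rw [hwz]
    simp [ZMod.natCast_self]
    field_simp
end

section
/- Let Q be a prime, F_Q = ZMod Q, and ℓ, β ∈ ℕ. Let s_A ∈ F_Q and suppose ρ : Fin β → Fin ℓ → F_Q satisfies ∑ ι, ρ j ι = s_A for every j ∈ Fin β. For each j let r_{A,j} ∈ F_Q, let b_j : Fin ℓ → F_Q take only the values 0 and 1, set r_{B,j} = ∑ ι, b_j ι · 2^(ι : ℕ), define o_{j,ι} = b_j ι · (r_{A,j} · 2^(ι : ℕ)) - ρ j ι, and set s_{B,j} = ∑ ι, o_{j,ι}. Then for every j ∈ Fin β, s_A + s_{B,j} = r_{A,j} · r_{B,j}. -/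
/-! Summing Bob's OT outputs over `ι` gives `r_A` times the binary expansion of `r_B` minus the
column sum of Alice's offsets, which is `s_A`. -/

theorem Finset.sum_mul_mul_sub_eq {R ι : Type*} [CommRing R] (s : Finset ι) (a : R)
    (b w ρ : ι → R) :
    ∑ i ∈ s, (b i * (a * w i) - ρ i) = a * ∑ i ∈ s, b i * w i - ∑ i ∈ s, ρ i := by
  rw [Finset.sum_sub_distrib, Finset.mul_sum]
  congr 1
  exact Finset.sum_congr rfl fun i _ => by ring

theorem ot_set_ole_correct_general (Q : ℕ) (ℓ β : ℕ)
    (s_A : ZMod Q) (ρ : Fin β → Fin ℓ → ZMod Q)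
    (hρ : ∀ j, ∑ ι, ρ j ι = s_A)
    (r_A : Fin β → ZMod Q)
    (b : Fin β → Fin ℓ → ZMod Q)
    (r_B : Fin β → ZMod Q) (hrB : ∀ j, r_B j = ∑ ι, b j ι * 2 ^ (ι : ℕ))
    (o : Fin β → Fin ℓ → ZMod Q)
    (ho : ∀ j ι, o j ι = b j ι * (r_A j * 2 ^ (ι : ℕ)) - ρ j ι)
    (s_B : Fin β → ZMod Q) (hsB : ∀ j, s_B j = ∑ ι, o j ι) :
    ∀ j, s_A + s_B j = r_A j * r_B j := by
  intro j
  simp only [hsB, ho, hrB, Finset.sum_mul_mul_sub_eq, hρ]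
  ring

/-- Correctness of the adapted OT-based offline phase for optimized (set) OLE
tuples: Alice fixes one `s_A` and offsets `ρ j ι` with `Σ_ι ρ j ι = s_A` for
every `j`; running Gilboa's product sharing for each `j` with bits `b j` of
`r_{B,j}` and outputs `o_{j,ι} = b j ι * (r_{A,j} * 2^ι) - ρ j ι` yields
shares `s_{B,j} = Σ_ι o_{j,ι}` satisfying `s_A + s_{B,j} = r_{A,j} * r_{B,j}`
for every `j`. -/
theorem ot_set_ole_correct (Q : ℕ) [Fact Q.Prime] (ℓ β : ℕ)
    (s_A : ZMod Q) (ρ : Fin β → Fin ℓ → ZMod Q)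
    (hρ : ∀ j, ∑ ι, ρ j ι = s_A)
    (r_A : Fin β → ZMod Q)
    (b : Fin β → Fin ℓ → ZMod Q) (hb : ∀ j ι, b j ι = 0 ∨ b j ι = 1)
    (r_B : Fin β → ZMod Q) (hrB : ∀ j, r_B j = ∑ ι, b j ι * 2 ^ (ι : ℕ))
    (o : Fin β → Fin ℓ → ZMod Q)
    (ho : ∀ j ι, o j ι = b j ι * (r_A j * 2 ^ (ι : ℕ)) - ρ j ι)
    (s_B : Fin β → ZMod Q) (hsB : ∀ j, s_B j = ∑ ι, o j ι) :
    ∀ j, s_A + s_B j = r_A j * r_B j :=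
  ot_set_ole_correct_general Q ℓ β s_A ρ hρ r_A b r_B hrB o ho s_B hsB
end
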